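/- arXiv:1610.01672 — 5 statements merged into one kernel-verified Lean document; each statement's English description precedes it below -/
import Mathlib

section
/- Suppose an even positive integer n cannot be expressed as the sum of two squares and at most one power of 2. Then for every integer α ≥ 0, the number 2^α · n also cannot be expressed as the sum of two squares and at most one power of 2. -/
/-- A natural number `m` is a sum of two squares and at most one power of 2. -/
def IsSumTwoSquaresAddAtMostOnePow (m : ℕ) : Prop :=
  ∃ x y : ℤ, (m : ℤ) = x ^ 2 + y ^ 2 ∨ ∃ a : ℕ, (m : ℤ) = x ^ 2 + y ^ 2 + 2 ^ a

/-!
If `2m = x² + y²` then `x ± y` are even and `m = ((x + y)/2)² + ((x - y)/2)²`, so a representation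
of `2m` with the power `2^(b+1)` halves to one of `m` with `2^b`. The only term that does not halve
is `2^0 = 1`, and `x² + y² + 1` is never divisible by `4`, so it cannot represent `2m` for even `m`.
-/

theorem Int.exists_sq_add_sq_of_two_mul_eq {m x y : ℤ} (h : 2 * m = x ^ 2 + y ^ 2) :
    ∃ a b : ℤ, m = a ^ 2 + b ^ 2 := by
  have hxy : Even (x + y) := by
    have h2 : Even (x ^ 2 + y ^ 2) := ⟨m, by linarith⟩
    simp only [Int.even_add, Int.even_pow, ne_eq, OfNat.ofNat_ne_zero, not_false_eq_true,
      and_true] at h2 ⊢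
    exact h2
  obtain ⟨k, hk⟩ := hxy
  exact ⟨k, k - y,
    mul_left_cancel₀ two_ne_zero (by linear_combination h + (x + 2 * k - y) * hk)⟩

theorem Int.not_four_dvd_sq_add_sq_add_one (x y : ℤ) : ¬ 4 ∣ x ^ 2 + y ^ 2 + 1 := by
  have hmod4 : ∀ a b : ZMod 4, a ^ 2 + b ^ 2 + 1 ≠ 0 := by decide
  intro h
  apply hmod4 x y
  exact_mod_cast (ZMod.intCast_zmod_eq_zero_iff_dvd _ 4).2 h

theorem IsSumTwoSquaresAddAtMostOnePow.of_two_mul {m : ℕ} (hm : Even m)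
    (h : IsSumTwoSquaresAddAtMostOnePow (2 * m)) : IsSumTwoSquaresAddAtMostOnePow m := by
  obtain ⟨x, y, hsq | ⟨_ | b, hpow⟩⟩ := h
  · have hhalf : 2 * (m : ℤ) = x ^ 2 + y ^ 2 := by exact_mod_cast hsq
    obtain ⟨a, c, hac⟩ := Int.exists_sq_add_sq_of_two_mul_eq hhalf
    exact ⟨a, c, Or.inl hac⟩
  · obtain ⟨k, rfl⟩ := hm
    exact absurd ⟨k, by push_cast at hpow; linear_combination -hpow⟩
      (Int.not_four_dvd_sq_add_sq_add_one x y)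
  · have hhalf : 2 * ((m : ℤ) - 2 ^ b) = x ^ 2 + y ^ 2 := by
      push_cast at hpow
      linear_combination hpow
    obtain ⟨a, c, hac⟩ := Int.exists_sq_add_sq_of_two_mul_eq hhalf
    exact ⟨a, c, Or.inr ⟨b, by linear_combination hac⟩⟩

theorem tower_one_pow_general (n : ℕ) (hev : Even n)
    (h : ¬ IsSumTwoSquaresAddAtMostOnePow n) :
    ∀ α : ℕ, ¬ IsSumTwoSquaresAddAtMostOnePow (2 ^ α * n) := by
  intro α
  induction α with
  | zero => simpa using h
  | succ β ih =>
    intro hrep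
    refine ih (IsSumTwoSquaresAddAtMostOnePow.of_two_mul (hev.mul_left _) ?_)
    rwa [pow_succ', mul_assoc] at hrep

theorem tower_one_pow (n : ℕ) (hn : 0 < n) (hev : Even n)
    (h : ¬ IsSumTwoSquaresAddAtMostOnePow n) :
    ∀ α : ℕ, ¬ IsSumTwoSquaresAddAtMostOnePow (2 ^ α * n) :=
  tower_one_pow_general n hev h
end

section
/- There are infinitely many positive integers that cannot be expressed as the sum of two squares and at most one power of 2. -/
lemma ZMod.sq_add_sq_ne_seven (u v : ZMod 8) : u ^ 2 + v ^ 2 ≠ 7 := by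
  revert u v
  decide

lemma ZMod.sq_add_sq_add_two_pow_ne_seven (u v : ZMod 8) {a : ℕ} (ha : a ≠ 1) :
    u ^ 2 + v ^ 2 + 2 ^ a ≠ 7 := by
  obtain _ | _ | b := a
  · revert u v
    decide
  · contradiction
  · rw [show (2 : ZMod 8) ^ (b + 1 + 1) = 4 * 2 ^ b by ring]
    generalize (2 : ZMod 8) ^ b = w
    revert u v w
    decide

lemma ZMod.sq_add_sq_add_two_ne_five (u v : ZMod 9) : u ^ 2 + v ^ 2 + 2 ≠ 5 := by
  revert u v
  decide

lemma not_isSumTwoSquaresAddAtMostOnePow_of_cast_eq {n : ℕ} (h8 : (n : ZMod 8) = 7)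
    (h9 : (n : ZMod 9) = 5) : ¬ IsSumTwoSquaresAddAtMostOnePow n := by
  rintro ⟨x, y, hn | ⟨a, hn⟩⟩
  · have hn8 : (n : ZMod 8) = x ^ 2 + y ^ 2 := by
      exact_mod_cast congrArg (Int.cast : ℤ → ZMod 8) hn
    exact ZMod.sq_add_sq_ne_seven _ _ (hn8 ▸ h8)
  · rcases eq_or_ne a 1 with rfl | ha
    · have hn9 : (n : ZMod 9) = x ^ 2 + y ^ 2 + 2 := by
        exact_mod_cast congrArg (Int.cast : ℤ → ZMod 9) hn
      exact ZMod.sq_add_sq_add_two_ne_five _ _ (hn9 ▸ h9)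
    · have hn8 : (n : ZMod 8) = x ^ 2 + y ^ 2 + 2 ^ a := by
        exact_mod_cast congrArg (Int.cast : ℤ → ZMod 8) hn
      exact ZMod.sq_add_sq_add_two_pow_ne_seven _ _ ha (hn8 ▸ h8)

theorem infinite_not_one_pow :
    {n : ℕ | 0 < n ∧ ¬ IsSumTwoSquaresAddAtMostOnePow n}.Infinite := by
  refine Set.infinite_of_injective_forall_mem (f := fun k : ℕ => 72 * k + 23)
    (fun a b hab => by simpa using hab) fun k => ⟨by omega, ?_⟩
  apply not_isSumTwoSquaresAddAtMostOnePow_of_cast_eq <;> push_cast <;> reduce_mod_char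
end

section
/- Suppose a positive integer n with n ≡ 0 (mod 18) cannot be expressed as the sum of two squares and at most two powers of 2. Then for every integer α ≥ 0, the number 2^α · n also cannot be expressed as the sum of two squares and at most two powers of 2. -/
/-!
Halving preserves representability of multiples of 18. If `2m = x² + y² + P` with `P` an even sum
of at most two powers of 2 (including `1 + 1`), then `x² + y²` is even and
`m = ((x - y) / 2)² + ((x + y) / 2)² + P / 2`. Otherwise `2m` is
`x² + y² + 1`, `x² + y² + 1 + 2^b` with `b ≥ 2`, or `x² + y² + 1 + 2`, which is impossible modulo 4,
4 and 9 respectively since `18 ∣ m`. Induction on `α` finishes the proof.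
-/

/-- A natural number `m` is a sum of two squares and at most two powers of 2. -/
def IsSumTwoSquaresAddAtMostTwoPow (m : ℕ) : Prop :=
  ∃ x y : ℤ, (m : ℤ) = x ^ 2 + y ^ 2 ∨ (∃ a : ℕ, (m : ℤ) = x ^ 2 + y ^ 2 + 2 ^ a) ∨
    ∃ a b : ℕ, (m : ℤ) = x ^ 2 + y ^ 2 + 2 ^ a + 2 ^ b

namespace Int

theorem exists_eq_sq_add_sq_add_of_two_mul (m c x y : ℤ) (h : 2 * m = x ^ 2 + y ^ 2 + 2 * c) :
    ∃ u v : ℤ, m = u ^ 2 + v ^ 2 + c :=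
  ⟨(x - y) / 2, (x + y) / 2, by
    rw [← sq_add_sq_of_two_mul_sq_add_sq (m := m - c) (by linarith)]; ring⟩

theorem not_four_dvd_sq_add_sq_add_one_s4 (x y : ℤ) : ¬ (4 : ℤ) ∣ x ^ 2 + y ^ 2 + 1 := fun h => by
  have h4 := (ZMod.intCast_zmod_eq_zero_iff_dvd _ 4).2 h
  push_cast at h4
  exact (by decide : ∀ u v : ZMod 4, u ^ 2 + v ^ 2 + 1 ≠ 0) _ _ h4

theorem not_nine_dvd_sq_add_sq_add_three (x y : ℤ) : ¬ (9 : ℤ) ∣ x ^ 2 + y ^ 2 + 3 := fun h => by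
  have h9 := (ZMod.intCast_zmod_eq_zero_iff_dvd _ 9).2 h
  push_cast at h9
  exact (by decide : ∀ u v : ZMod 9, u ^ 2 + v ^ 2 + 3 ≠ 0) _ _ h9

end Int

theorem IsSumTwoSquaresAddAtMostTwoPow.of_two_mul_eq_add_two_pow_add_two_pow {m a b : ℕ}
    (h18 : 18 ∣ m) {x y : ℤ} (hab : a ≤ b) (h : 2 * (m : ℤ) = x ^ 2 + y ^ 2 + 2 ^ a + 2 ^ b) :
    IsSumTwoSquaresAddAtMostTwoPow m := by
  obtain _ | a := a
  · obtain _ | _ | b := b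
    · obtain ⟨u, v, huv⟩ := Int.exists_eq_sq_add_sq_add_of_two_mul m 1 x y (by linarith)
      exact ⟨u, v, .inr (.inl ⟨0, by simpa using huv⟩)⟩
    · exact absurd (by norm_num at h; omega) (Int.not_nine_dvd_sq_add_sq_add_three x y)
    · exact absurd (by rw [pow_add] at h; norm_num at h; omega)
        (Int.not_four_dvd_sq_add_sq_add_one_s4 x y)
  · obtain ⟨b, rfl⟩ : ∃ b', b = b' + 1 := ⟨b - 1, by omega⟩
    obtain ⟨u, v, huv⟩ := Int.exists_eq_sq_add_sq_add_of_two_mul m (2 ^ a + 2 ^ b) x y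
      (by rw [h]; ring)
    exact ⟨u, v, .inr (.inr ⟨a, b, by rw [huv]; ring⟩)⟩

theorem IsSumTwoSquaresAddAtMostTwoPow.of_two_mul {m : ℕ} (h18 : 18 ∣ m)
    (h : IsSumTwoSquaresAddAtMostTwoPow (2 * m)) :
    IsSumTwoSquaresAddAtMostTwoPow m := by
  obtain ⟨x, y, h | ⟨_ | a, h⟩ | ⟨a, b, h⟩⟩ := h <;> push_cast at h
  · obtain ⟨u, v, huv⟩ := Int.exists_eq_sq_add_sq_add_of_two_mul m 0 x y (by linarith)
    exact ⟨u, v, .inl (by simpa using huv)⟩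
  · exact absurd (by omega) (Int.not_four_dvd_sq_add_sq_add_one_s4 x y)
  · obtain ⟨u, v, huv⟩ := Int.exists_eq_sq_add_sq_add_of_two_mul m (2 ^ a) x y (by rw [h]; ring)
    exact ⟨u, v, .inr (.inl ⟨a, huv⟩)⟩
  · rcases le_total a b with hab | hba
    · exact .of_two_mul_eq_add_two_pow_add_two_pow h18 hab h
    · exact .of_two_mul_eq_add_two_pow_add_two_pow h18 hba (x := y) (y := x) (by rw [h]; ring)

theorem tower_two_pow_general (n : ℕ) (h18 : n % 18 = 0)
    (h : ¬ IsSumTwoSquaresAddAtMostTwoPow n) :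
    ∀ α : ℕ, ¬ IsSumTwoSquaresAddAtMostTwoPow (2 ^ α * n) := by
  intro α
  induction α with
  | zero => simpa using h
  | succ k ih =>
    refine fun hr => ih (.of_two_mul (Dvd.dvd.mul_left (Nat.dvd_of_mod_eq_zero h18) _) ?_)
    rwa [pow_succ', mul_assoc] at hr

theorem tower_two_pow (n : ℕ) (hn : 0 < n) (h18 : n % 18 = 0)
    (h : ¬ IsSumTwoSquaresAddAtMostTwoPow n) :
    ∀ α : ℕ, ¬ IsSumTwoSquaresAddAtMostTwoPow (2 ^ α * n) :=
  tower_two_pow_general n h18 h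
end

section
/- The number of integers not exceeding N that cannot be written as a sum of two squares and at most one power of 2 is at least ⌊(N − 23)/72⌋ + 1 for every integer N ≥ 23; consequently, the set of such integers has lower asymptotic density at least 1/72. -/
open Filter Topology

namespace ZMod

theorem sq_add_sq_ne_seven_s12 (u v : ZMod 8) : u ^ 2 + v ^ 2 ≠ 7 := by
  revert u v; decide

theorem sq_add_sq_add_two_pow_ne_seven_s12 (u v : ZMod 8) {a : ℕ} (ha : a ≠ 1) :
    u ^ 2 + v ^ 2 + 2 ^ a ≠ 7 := by
  match a, ha with
  | 0, _ => revert u v; decide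
  | 2, _ => revert u v; decide
  | a + 3, _ =>
    rw [pow_add, show (2 : ZMod 8) ^ 3 = 0 by decide, mul_zero, add_zero]
    exact sq_add_sq_ne_seven_s12 u v

theorem sq_add_sq_add_two_ne_five_s12 (u v : ZMod 9) : u ^ 2 + v ^ 2 + 2 ≠ 5 := by
  revert u v; decide

end ZMod

theorem not_isSumTwoSquaresAddAtMostOnePow {m : ℕ} (h8 : m % 8 = 7) (h9 : m % 9 = 5) :
    ¬ IsSumTwoSquaresAddAtMostOnePow m := by
  have hm8 : (m : ZMod 8) = 7 := by rw [← ZMod.natCast_mod, h8]; rfl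
  have hm9 : (m : ZMod 9) = 5 := by rw [← ZMod.natCast_mod, h9]; rfl
  rintro ⟨x, y, h | ⟨a, h⟩⟩
  · refine ZMod.sq_add_sq_ne_seven_s12 x y ?_
    rw [← hm8]
    exact_mod_cast (congrArg (Int.cast : ℤ → ZMod 8) h).symm
  · rcases eq_or_ne a 1 with rfl | ha
    · refine ZMod.sq_add_sq_add_two_ne_five_s12 x y ?_
      rw [← hm9]
      exact_mod_cast (congrArg (Int.cast : ℤ → ZMod 9) h).symm
    · refine ZMod.sq_add_sq_add_two_pow_ne_seven_s12 x y ha ?_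
      rw [← hm8]
      exact_mod_cast (congrArg (Int.cast : ℤ → ZMod 8) h).symm

def exceptionsUpTo (N : ℕ) : Set ℕ :=
  {m : ℕ | 0 < m ∧ m ≤ N ∧ ¬ IsSumTwoSquaresAddAtMostOnePow m}

theorem exceptionsUpTo_subset_Icc (N : ℕ) : exceptionsUpTo N ⊆ Set.Icc 1 N :=
  fun _ hm => ⟨hm.1, hm.2.1⟩

theorem card_exceptionsUpTo_le (N : ℕ) : Nat.card (exceptionsUpTo N) ≤ N := by
  rw [Nat.card_coe_set_eq]
  calc (exceptionsUpTo N).ncard ≤ (Set.Icc 1 N).ncard :=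
        Set.ncard_le_ncard (exceptionsUpTo_subset_Icc N) (Set.finite_Icc 1 N)
    _ = N := by simp [Set.ncard_eq_toFinset_card']

theorem le_card_exceptionsUpTo {N : ℕ} (hN : 23 ≤ N) :
    (N - 23) / 72 + 1 ≤ Nat.card (exceptionsUpTo N) := by
  have : Finite (exceptionsUpTo N) :=
    ((Set.finite_Icc 1 N).subset (exceptionsUpTo_subset_Icc N)).to_subtype
  have hk (k : Fin ((N - 23) / 72 + 1)) : 23 + 72 * k.val ∈ exceptionsUpTo N := by
    have := Nat.div_mul_le_self (N - 23) 72
    refine ⟨by omega, by omega, not_isSumTwoSquaresAddAtMostOnePow (by omega) (by omega)⟩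
  simpa only [Nat.card_eq_fintype_card, Fintype.card_fin] using Nat.card_le_card_of_injective (fun k => ⟨_, hk k⟩)
    fun k l hkl => Fin.ext (by simpa using hkl)

theorem one_div_le_liminf_div_of_forall_le {c : ℕ → ℕ} {a d : ℕ} (hd : 0 < d)
    (hc : ∀ N, a ≤ N → (N - a) / d + 1 ≤ c N) (hcN : ∀ N, c N ≤ N) :
    (1 / d : ℝ) ≤ liminf (fun N => (c N : ℝ) / N) atTop := by
  have hlim : Tendsto (fun N : ℕ => 1 / d - (a / d : ℝ) / N) atTop (𝓝 (1 / d)) := by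
    simpa using tendsto_const_nhds.sub (tendsto_const_div_atTop_nhds_zero_nat (a / d : ℝ))
  have hbdd : IsBoundedUnder (· ≤ ·) atTop fun N => (c N : ℝ) / N :=
    isBoundedUnder_of ⟨1, fun N => div_le_one_of_le₀ (by exact_mod_cast hcN N) N.cast_nonneg⟩
  rw [← hlim.liminf_eq]
  refine liminf_le_liminf ?_ hlim.isBoundedUnder_ge hbdd.isCoboundedUnder_ge
  filter_upwards [eventually_ge_atTop (max a 1)] with N hN
  have haN : a ≤ N := le_of_max_le_left hN
  have hN0 : (0 : ℝ) < N := by exact_mod_cast le_of_max_le_right hN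
  have hd0 : (0 : ℝ) < d := by exact_mod_cast hd
  have hNa : N - a ≤ d * c N := by
    have := Nat.lt_div_mul_add (a := N - a) hd
    have := hc N haN
    nlinarith
  have hNa' : (N : ℝ) - a ≤ d * c N := by
    rw [← Nat.cast_sub haN]
    exact_mod_cast hNa
  calc 1 / d - (a / d : ℝ) / N = (N - a) / (d * N) := by field_simp
    _ ≤ c N / N := by
      rw [div_le_div_iff₀ (by positivity) hN0]
      nlinarith

theorem count_not_one_pow :
    (∀ N : ℕ, 23 ≤ N →
      (N - 23) / 72 + 1 ≤
        Nat.card {m : ℕ | 0 < m ∧ m ≤ N ∧ ¬ IsSumTwoSquaresAddAtMostOnePow m}) ∧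
    (1 / 72 : ℝ) ≤ Filter.liminf
      (fun N : ℕ =>
        (Nat.card {m : ℕ | 0 < m ∧ m ≤ N ∧ ¬ IsSumTwoSquaresAddAtMostOnePow m} : ℝ) / N)
      Filter.atTop :=
  ⟨fun _ => le_card_exceptionsUpTo, by
    exact_mod_cast one_div_le_liminf_div_of_forall_le (by norm_num)
      (fun _ => le_card_exceptionsUpTo) card_exceptionsUpTo_le⟩
end

section
/- For every integer N ≥ 1151121374334, the number of integers in [2, N] that cannot be expressed as the sum of two squares and at most two powers of 2 is at least ⌊log₂(N / 1151121374334)⌋ + 1. -/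
lemma desc2 (x y k : ℤ) (h : x^2 + y^2 = 2*k) : ∃ u v : ℤ, u^2 + v^2 = k := by
  have h1 : Even (x^2 + y^2) := ⟨k, by linarith⟩
  have hno : ¬ Odd (x^2 + y^2) := Int.not_odd_iff_even.2 h1
  have hxy : Even (x + y) := by
    rcases Int.even_or_odd x with hx | hx <;> rcases Int.even_or_odd y with hy | hy
    · exact hx.add hy
    · have hx2 : Even (x^2) := by rw [pow_two]; exact hx.mul_right x
      exact absurd (hx2.add_odd hy.pow) hno
    · have hy2 : Even (y^2) := by rw [pow_two]; exact hy.mul_right y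
      exact absurd (Odd.add_even hx.pow hy2) hno
    · exact hx.add_odd hy
  obtain ⟨u, hu⟩ := hxy
  refine ⟨u, x - u, ?_⟩
  have h2 : 2*(u^2 + (x-u)^2) = 2*k := by linear_combination h - (2*u - x + y) * hu
  linarith

lemma desc_pow : ∀ (e : ℕ) (x y m : ℤ), x^2 + y^2 = 2^e * m → ∃ u v : ℤ, u^2 + v^2 = m := by
  intro e
  induction e with
  | zero => intro x y m h; exact ⟨x, y, by linarith⟩
  | succ n ih =>
    intro x y m h
    obtain ⟨u, v, huv⟩ := desc2 x y (2^n * m) (by rw [h]; ring)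
    exact ih u v m huv

lemma mod4 {u v m : ℤ} (hm : m % 4 = 3) (h : u^2 + v^2 = m) : False := by
  have key : ∀ a b : ZMod 4, a^2 + b^2 ≠ 3 := by decide
  have h4 : ((m : ℤ) : ZMod 4) = 3 := by
    have hq : m = 4 * (m / 4) + 3 := by omega
    rw [hq]; push_cast
    simp [show (4 : ZMod 4) = 0 by decide]
  apply key (u : ZMod 4) (v : ZMod 4)
  calc ((u:ZMod 4))^2 + (v:ZMod 4)^2 = ((u^2+v^2 : ℤ) : ZMod 4) := by push_cast; ring
  _ = ((m:ℤ) : ZMod 4) := by rw [h]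
  _ = 3 := h4

lemma pdvd (p : ℕ) (hp : p.Prime) (h3 : p % 4 = 3) {x y : ℤ}
    (h : (p:ℤ) ∣ x^2 + y^2) : (p:ℤ) ∣ x ∧ (p:ℤ) ∣ y := by
  haveI : Fact p.Prime := ⟨hp⟩
  have hz : ((x : ZMod p))^2 + (y : ZMod p)^2 = 0 := by
    have := (ZMod.intCast_zmod_eq_zero_iff_dvd (x^2+y^2) p).2 h
    push_cast at this
    exact this
  have hnsq : ¬ IsSquare (-1 : ZMod p) := by
    rw [ZMod.exists_sq_eq_neg_one_iff]
    simp [h3]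
  have hy0 : (y : ZMod p) = 0 := by
    by_contra hy
    apply hnsq
    refine ⟨(x : ZMod p) * (y : ZMod p)⁻¹, ?_⟩
    have hx2 : ((x:ZMod p))^2 = -((y:ZMod p))^2 := by linear_combination hz
    field_simp
    linear_combination -hx2
  have hx0 : (x : ZMod p) = 0 := by
    rw [hy0] at hz
    have : ((x : ZMod p))^2 = 0 := by linear_combination hz
    exact pow_eq_zero_iff (n := 2) (by norm_num) |>.1 this
  exact ⟨(ZMod.intCast_zmod_eq_zero_iff_dvd x p).1 hx0,
         (ZMod.intCast_zmod_eq_zero_iff_dvd y p).1 hy0⟩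

lemma padV (p : ℕ) (hp : p.Prime) (h3 : p % 4 = 3) :
    ∀ (k : ℕ) (x y u : ℤ), x^2 + y^2 = (p:ℤ)^(2*k+1) * u → (p:ℤ) ∣ u := by
  intro k
  induction k with
  | zero =>
    intro x y u h
    have hd : (p:ℤ) ∣ x^2 + y^2 := ⟨u, by rw [h]; ring⟩
    obtain ⟨⟨a, ha⟩, ⟨b, hb⟩⟩ := pdvd p hp h3 hd
    have hp0 : (p:ℤ) ≠ 0 := by exact_mod_cast hp.ne_zero
    refine ⟨a^2 + b^2, ?_⟩
    have : (p:ℤ) * ((p:ℤ) * (a^2+b^2)) = (p:ℤ) * u := by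
      rw [ha, hb] at h; ring_nf; ring_nf at h; linarith [h]
    exact (mul_left_cancel₀ hp0 this).symm
  | succ n ih =>
    intro x y u h
    have hd : (p:ℤ) ∣ x^2 + y^2 := ⟨(p:ℤ)^(2*n+2) * u, by rw [h]; ring⟩
    obtain ⟨⟨a, ha⟩, ⟨b, hb⟩⟩ := pdvd p hp h3 hd
    have hp0 : ((p:ℤ)^2) ≠ 0 := pow_ne_zero _ (by exact_mod_cast hp.ne_zero)
    apply ih a b u
    have : ((p:ℤ)^2) * (a^2 + b^2) = ((p:ℤ)^2) * ((p:ℤ)^(2*n+1) * u) := by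
      rw [ha, hb] at h
      linear_combination h
    exact mul_left_cancel₀ hp0 this

lemma certP (p : ℕ) (hp : p.Prime) (h3 : p % 4 = 3) (k : ℕ) (w : ℤ) {m u v : ℤ}
    (h : u^2 + v^2 = m) (hm : m = (p:ℤ)^(2*k+1) * w) (hw : ¬ (p:ℤ) ∣ w) : False :=
  hw (padV p hp h3 k u v w (h.trans hm))

lemma certK1 (t : ℕ) (m' : ℤ) {m u v : ℤ} (h : u^2 + v^2 = m)
    (hm : m = 2^t * m') (h4 : m' % 4 = 3) : False := by
  obtain ⟨a, b, hab⟩ := desc_pow t u v m' (h.trans hm)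
  exact mod4 h4 hab

lemma case1 (β a : ℕ) (x y : ℤ)
    (h : (2:ℤ)^β * 575560687167 = x^2 + y^2 + 2^a) : False := by
  rcases Nat.lt_or_ge a β with hab | hab
  · obtain ⟨i, rfl⟩ : ∃ i, β = a + (i+1) := ⟨β - a - 1, by omega⟩
    have hx : x^2 + y^2 = 2^a * (2^(i+1) * 575560687167 - 1) := by linear_combination -h
    obtain ⟨u, v, hu⟩ := desc_pow a x y _ hx
    rcases i with _ | j
    ·
      exact certP 7 (by norm_num) (by norm_num) 0 164445910619 hu (by norm_num) (by norm_num)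
    ·
      have hpow : (2:ℤ)^(j+1+1) = 4 * 2^j := by ring
      rw [hpow] at hu
      revert hu
      generalize (2:ℤ)^j = t
      intro hu
      exact mod4 (by omega) hu
  · obtain ⟨j, rfl⟩ : ∃ j, a = β + j := ⟨a - β, by omega⟩
    have hx : x^2 + y^2 = 2^β * (575560687167 - 2^j) := by linear_combination -h
    obtain ⟨u, v, hu⟩ := desc_pow β x y _ hx
    match j with
    | 0 =>
      exact certK1 1 287780343583 hu (by norm_num) (by norm_num)
    | 1 =>
      exact certP 13751 (by norm_num) (by norm_num) 0 41855915 hu (by norm_num) (by norm_num)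
    | (j+2) =>
      have hpow : (2:ℤ)^(j+2) = 4 * 2^j := by ring
      rw [hpow] at hu
      revert hu
      generalize (2:ℤ)^j = t
      intro hu
      exact mod4 (by omega) hu

lemma case2 (β a b : ℕ) (hab : a ≤ b) (x y : ℤ)
    (h : (2:ℤ)^β * 575560687167 = x^2 + y^2 + 2^a + 2^b) : False := by
  rcases eq_or_lt_of_le hab with rfl | hlt
  · exact case1 β (a+1) x y (by linear_combination h)
  · obtain ⟨j, rfl⟩ : ∃ j, b = a + (j+1) := ⟨b - a - 1, by omega⟩
    rcases Nat.lt_or_ge a β with h1 | h1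
    · obtain ⟨i, rfl⟩ : ∃ i, β = a + (i+1) := ⟨β - a - 1, by omega⟩
      have hx : x^2 + y^2 = 2^a * (2^(i+1) * 575560687167 - 1 - 2^(j+1)) := by
        linear_combination -h
      obtain ⟨u, v, hu⟩ := desc_pow a x y _ hx
      rcases i with _ | i
      ·
        match j with
        | 0 => exact mod4 (by norm_num) hu
        | (j+1) =>
          rcases Nat.lt_or_ge j 39 with hj | hj
          · interval_cases j
            · exact certP 19 (by norm_num) (by norm_num) 0 60585335491 hu (by norm_num) (by norm_num)
            · exact certP 3 (by norm_num) (by norm_num) 1 42634124975 hu (by norm_num) (by norm_num)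
            · exact certP 43 (by norm_num) (by norm_num) 0 26770264519 hu (by norm_num) (by norm_num)
            · exact certP 3 (by norm_num) (by norm_num) 0 383707124767 hu (by norm_num) (by norm_num)
            · exact certP 23 (by norm_num) (by norm_num) 0 50048755403 hu (by norm_num) (by norm_num)
            · exact certP 3 (by norm_num) (by norm_num) 0 383707124735 hu (by norm_num) (by norm_num)
            · exact certP 67 (by norm_num) (by norm_num) 0 17180916031 hu (by norm_num) (by norm_num)
            · exact certP 1423 (by norm_num) (by norm_num) 0 808939827 hu (by norm_num) (by norm_num)
            · exact certP 59 (by norm_num) (by norm_num) 0 19510531751 hu (by norm_num) (by norm_num)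
            · exact certP 3 (by norm_num) (by norm_num) 0 383707124095 hu (by norm_num) (by norm_num)
            · exact certP 31 (by norm_num) (by norm_num) 0 37132947427 hu (by norm_num) (by norm_num)
            · exact certP 3 (by norm_num) (by norm_num) 0 383707122047 hu (by norm_num) (by norm_num)
            · exact certP 136943 (by norm_num) (by norm_num) 0 8405843 hu (by norm_num) (by norm_num)
            · exact certP 103 (by norm_num) (by norm_num) 0 11175935355 hu (by norm_num) (by norm_num)
            · exact certP 163 (by norm_num) (by norm_num) 0 7062093919 hu (by norm_num) (by norm_num)
            · exact certP 3 (by norm_num) (by norm_num) 0 383707081087 hu (by norm_num) (by norm_num)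
            · exact certP 43 (by norm_num) (by norm_num) 0 26770258423 hu (by norm_num) (by norm_num)
            · exact certP 3 (by norm_num) (by norm_num) 0 383706950015 hu (by norm_num) (by norm_num)
            · exact certP 19 (by norm_num) (by norm_num) 0 60585280303 hu (by norm_num) (by norm_num)
            · exact certP 3 (by norm_num) (by norm_num) 3 526346263 hu (by norm_num) (by norm_num)
            · exact certP 31 (by norm_num) (by norm_num) 0 37132812259 hu (by norm_num) (by norm_num)
            · exact certP 3 (by norm_num) (by norm_num) 0 383704328575 hu (by norm_num) (by norm_num)
            · exact certP 98011 (by norm_num) (by norm_num) 0 11744647 hu (by norm_num) (by norm_num)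
            · exact certP 3 (by norm_num) (by norm_num) 0 383695939967 hu (by norm_num) (by norm_num)
            · exact certP 359 (by norm_num) (by norm_num) 0 3206279291 hu (by norm_num) (by norm_num)
            · exact certP 11 (by norm_num) (by norm_num) 0 104635196055 hu (by norm_num) (by norm_num)
            · exact certP 23 (by norm_num) (by norm_num) 0 50037084299 hu (by norm_num) (by norm_num)
            · exact certP 3 (by norm_num) (by norm_num) 0 383528167807 hu (by norm_num) (by norm_num)
            · exact certP 71 (by norm_num) (by norm_num) 0 16197853979 hu (by norm_num) (by norm_num)
            · exact certP 3 (by norm_num) (by norm_num) 0 382991296895 hu (by norm_num) (by norm_num)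
            · exact certP 31 (by norm_num) (by norm_num) 0 36994400227 hu (by norm_num) (by norm_num)
            · exact certP 431 (by norm_num) (by norm_num) 0 2650885011 hu (by norm_num) (by norm_num)
            · exact certP 213307 (by norm_num) (by norm_num) 0 5316007 hu (by norm_num) (by norm_num)
            · exact certP 3 (by norm_num) (by norm_num) 0 372253878655 hu (by norm_num) (by norm_num)
            · exact certP 79 (by norm_num) (by norm_num) 0 13701289843 hu (by norm_num) (by norm_num)
            · exact certP 3 (by norm_num) (by norm_num) 0 337894140287 hu (by norm_num) (by norm_num)
            · exact certP 19 (by norm_num) (by norm_num) 0 46118077231 hu (by norm_num) (by norm_num)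
            · exact certP 3 (by norm_num) (by norm_num) 1 22272798535 hu (by norm_num) (by norm_num)
            · exact certP 1699 (by norm_num) (by norm_num) 0 30376543 hu (by norm_num) (by norm_num)
          · -- j + 2 ≥ 41 : value negative
            have h41 : (2199023255552:ℤ) ≤ 2^(j+1+1) := by
              calc (2199023255552:ℤ) = 2^41 := by norm_num
              _ ≤ 2^(j+1+1) := pow_le_pow_right₀ (by norm_num) (by omega)
            have h2 : (2:ℤ)^(0+1) * 575560687167 = 1151121374334 := by norm_num
            rw [h2] at hu
            linarith [sq_nonneg u, sq_nonneg v, h41, hu]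
      ·
        match j with
        | 0 =>
          refine certP 3 (by norm_num) (by norm_num) 0 (2^(i+1+1) * 191853562389 - 1) hu
            (by push_cast; ring) ?_
          revert hu
          generalize (2:ℤ)^(i+1+1) = t
          intro _
          omega
        | (j+1) =>
          obtain ⟨t, s, hp1, hp2⟩ : ∃ t s : ℤ, (2:ℤ)^(i+1+1) = 4*t ∧ (2:ℤ)^(j+1+1) = 4*s :=
            ⟨2^i, 2^j, by ring, by ring⟩
          rw [hp1, hp2] at hu
          exact mod4 (by omega) hu
    · obtain ⟨i, rfl⟩ : ∃ i, a = β + i := ⟨a - β, by omega⟩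
      have hx : x^2 + y^2 = 2^β * (575560687167 - 2^i - 2^(i+(j+1))) := by
        linear_combination -h
      obtain ⟨u, v, hu⟩ := desc_pow β x y _ hx
      match i with
      | 0 =>
        simp only [Nat.zero_add] at hu
        rcases Nat.lt_or_ge j 39 with hj | hj
        · interval_cases j
          · exact certK1 2 143890171791 hu (by norm_num) (by norm_num)
          · exact certP 5623 (by norm_num) (by norm_num) 0 102358294 hu (by norm_num) (by norm_num)
          · exact certK1 1 287780343579 hu (by norm_num) (by norm_num)
          · exact certK1 1 287780343575 hu (by norm_num) (by norm_num)
          · exact certK1 1 287780343567 hu (by norm_num) (by norm_num)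
          · exact certK1 1 287780343551 hu (by norm_num) (by norm_num)
          · exact certK1 1 287780343519 hu (by norm_num) (by norm_num)
          · exact certK1 1 287780343455 hu (by norm_num) (by norm_num)
          · exact certK1 1 287780343327 hu (by norm_num) (by norm_num)
          · exact certK1 1 287780343071 hu (by norm_num) (by norm_num)
          · exact certK1 1 287780342559 hu (by norm_num) (by norm_num)
          · exact certK1 1 287780341535 hu (by norm_num) (by norm_num)
          · exact certK1 1 287780339487 hu (by norm_num) (by norm_num)
          · exact certK1 1 287780335391 hu (by norm_num) (by norm_num)
          · exact certK1 1 287780327199 hu (by norm_num) (by norm_num)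
          · exact certK1 1 287780310815 hu (by norm_num) (by norm_num)
          · exact certK1 1 287780278047 hu (by norm_num) (by norm_num)
          · exact certK1 1 287780212511 hu (by norm_num) (by norm_num)
          · exact certK1 1 287780081439 hu (by norm_num) (by norm_num)
          · exact certK1 1 287779819295 hu (by norm_num) (by norm_num)
          · exact certK1 1 287779295007 hu (by norm_num) (by norm_num)
          · exact certK1 1 287778246431 hu (by norm_num) (by norm_num)
          · exact certK1 1 287776149279 hu (by norm_num) (by norm_num)
          · exact certK1 1 287771954975 hu (by norm_num) (by norm_num)
          · exact certK1 1 287763566367 hu (by norm_num) (by norm_num)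
          · exact certK1 1 287746789151 hu (by norm_num) (by norm_num)
          · exact certK1 1 287713234719 hu (by norm_num) (by norm_num)
          · exact certK1 1 287646125855 hu (by norm_num) (by norm_num)
          · exact certK1 1 287511908127 hu (by norm_num) (by norm_num)
          · exact certK1 1 287243472671 hu (by norm_num) (by norm_num)
          · exact certK1 1 286706601759 hu (by norm_num) (by norm_num)
          · exact certK1 1 285632859935 hu (by norm_num) (by norm_num)
          · exact certK1 1 283485376287 hu (by norm_num) (by norm_num)
          · exact certK1 1 279190408991 hu (by norm_num) (by norm_num)
          · exact certK1 1 270600474399 hu (by norm_num) (by norm_num)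
          · exact certK1 1 253420605215 hu (by norm_num) (by norm_num)
          · exact certK1 1 219060866847 hu (by norm_num) (by norm_num)
          · exact certK1 1 150341390111 hu (by norm_num) (by norm_num)
          · exact certK1 1 12902436639 hu (by norm_num) (by norm_num)
        · have h40 : (1099511627776:ℤ) ≤ 2^(j+1) := by
            calc (1099511627776:ℤ) = 2^40 := by norm_num
            _ ≤ 2^(j+1) := pow_le_pow_right₀ (by norm_num) (by omega)
          nlinarith [sq_nonneg u, sq_nonneg v, hu, h40]
      | 1 =>
        rcases Nat.lt_or_ge j 38 with hj | hj
        · interval_cases j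
          · exact certP 3 (by norm_num) (by norm_num) 0 191853562387 hu (by norm_num) (by norm_num)
          · exact certP 29527 (by norm_num) (by norm_num) 0 19492691 hu (by norm_num) (by norm_num)
          · exact certP 3 (by norm_num) (by norm_num) 1 21317062487 hu (by norm_num) (by norm_num)
          · exact certP 10651 (by norm_num) (by norm_num) 0 54038183 hu (by norm_num) (by norm_num)
          · exact certP 3 (by norm_num) (by norm_num) 0 191853562367 hu (by norm_num) (by norm_num)
          · exact certP 7 (by norm_num) (by norm_num) 0 82222955291 hu (by norm_num) (by norm_num)
          · exact certP 3 (by norm_num) (by norm_num) 0 191853562303 hu (by norm_num) (by norm_num)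
          · exact certP 31 (by norm_num) (by norm_num) 0 18566473763 hu (by norm_num) (by norm_num)
          · exact certP 7 (by norm_num) (by norm_num) 0 82222955163 hu (by norm_num) (by norm_num)
          · exact certP 30839 (by norm_num) (by norm_num) 0 18663403 hu (by norm_num) (by norm_num)
          · exact certP 3 (by norm_num) (by norm_num) 0 191853561023 hu (by norm_num) (by norm_num)
          · exact certP 7 (by norm_num) (by norm_num) 0 82222954139 hu (by norm_num) (by norm_num)
          · exact certP 3 (by norm_num) (by norm_num) 0 191853556927 hu (by norm_num) (by norm_num)
          · exact certP 16363 (by norm_num) (by norm_num) 0 35174519 hu (by norm_num) (by norm_num)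
          · exact certP 7 (by norm_num) (by norm_num) 0 82222945947 hu (by norm_num) (by norm_num)
          · exact certP 19 (by norm_num) (by norm_num) 0 30292660847 hu (by norm_num) (by norm_num)
          · exact certP 3 (by norm_num) (by norm_num) 0 191853475007 hu (by norm_num) (by norm_num)
          · exact certP 31 (by norm_num) (by norm_num) 0 18566456867 hu (by norm_num) (by norm_num)
          · exact certP 3 (by norm_num) (by norm_num) 0 191853212863 hu (by norm_num) (by norm_num)
          · exact certP 11 (by norm_num) (by norm_num) 0 52323508183 hu (by norm_num) (by norm_num)
          · exact certP 3 (by norm_num) (by norm_num) 1 21316907143 hu (by norm_num) (by norm_num)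
          · exact certP 727 (by norm_num) (by norm_num) 0 791681291 hu (by norm_num) (by norm_num)
          · exact certP 3 (by norm_num) (by norm_num) 0 191847969983 hu (by norm_num) (by norm_num)
          · exact certP 7 (by norm_num) (by norm_num) 0 82218161819 hu (by norm_num) (by norm_num)
          · exact certP 3 (by norm_num) (by norm_num) 0 191831192767 hu (by norm_num) (by norm_num)
          · exact certP 47 (by norm_num) (by norm_num) 0 12243116371 hu (by norm_num) (by norm_num)
          · exact certP 7 (by norm_num) (by norm_num) 0 82184607387 hu (by norm_num) (by norm_num)
          · exact certP 31 (by norm_num) (by norm_num) 0 18549155363 hu (by norm_num) (by norm_num)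
          · exact certP 3 (by norm_num) (by norm_num) 0 191495648447 hu (by norm_num) (by norm_num)
          · exact certP 7 (by norm_num) (by norm_num) 0 81916171931 hu (by norm_num) (by norm_num)
          · exact certP 3 (by norm_num) (by norm_num) 0 190421906623 hu (by norm_num) (by norm_num)
          · exact certP 32587 (by norm_num) (by norm_num) 0 17398679 hu (by norm_num) (by norm_num)
          · exact certP 7 (by norm_num) (by norm_num) 0 79768688283 hu (by norm_num) (by norm_num)
          · exact certP 19 (by norm_num) (by norm_num) 0 28484260463 hu (by norm_num) (by norm_num)
          · exact certP 3 (by norm_num) (by norm_num) 0 168947070143 hu (by norm_num) (by norm_num)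
          · exact certP 7 (by norm_num) (by norm_num) 0 62588819099 hu (by norm_num) (by norm_num)
          · exact certP 3 (by norm_num) (by norm_num) 0 100227593407 hu (by norm_num) (by norm_num)
          · exact certP 31 (by norm_num) (by norm_num) 0 832415267 hu (by norm_num) (by norm_num)
        · have h40 : (1099511627776:ℤ) ≤ 2^(1+(j+1)) := by
            calc (1099511627776:ℤ) = 2^40 := by norm_num
            _ ≤ 2^(1+(j+1)) := pow_le_pow_right₀ (by norm_num) (by omega)
          nlinarith [sq_nonneg u, sq_nonneg v, hu, h40]
      | (i+2) =>
        obtain ⟨t, s, hp1, hp2⟩ : ∃ t s : ℤ, (2:ℤ)^(i+2) = 4*t ∧ (2:ℤ)^(i+2+(j+1)) = 4*s :=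
          ⟨2^i, 2^(i+j+1), by ring, by ring⟩
        rw [hp1, hp2] at hu
        exact mod4 (by omega) hu


lemma notR (α : ℕ) : ¬ IsSumTwoSquaresAddAtMostTwoPow (2^α * 1151121374334) := by
  rintro ⟨x, y, hc⟩
  have hn : ((2^α * 1151121374334 : ℕ) : ℤ) = 2^(α+1) * 575560687167 := by
    push_cast; ring
  rcases hc with h | ⟨a, h⟩ | ⟨a, b, h⟩
  · rw [hn] at h
    obtain ⟨u, v, hu⟩ := desc_pow (α+1) x y _ h.symm
    exact mod4 (by norm_num) hu
  · rw [hn] at h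
    exact case1 (α+1) a x y h
  · rw [hn] at h
    rcases le_total a b with hab | hab
    · exact case2 (α+1) a b hab x y h
    · exact case2 (α+1) b a hab x y (by linear_combination h)

theorem count_not_two_pow (N : ℕ) (hN : 1151121374334 ≤ N) :
    Nat.log 2 (N / 1151121374334) + 1 ≤
      Nat.card {m : ℕ | 2 ≤ m ∧ m ≤ N ∧ ¬ IsSumTwoSquaresAddAtMostTwoPow m} := by
  
  classical
  set k := Nat.log 2 (N / 1151121374334) with hk
  set S := {m : ℕ | 2 ≤ m ∧ m ≤ N ∧ ¬ IsSumTwoSquaresAddAtMostTwoPow m} with hS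
  have hfin : S.Finite :=
    Set.Finite.subset (Set.finite_Icc 2 N) (fun m hm => Set.mem_Icc.2 ⟨hm.1, hm.2.1⟩)
  haveI : Finite ↥S := hfin.to_subtype
  have hmem : ∀ i : Fin (k+1), 2^(i:ℕ) * 1151121374334 ∈ S := by
    intro i
    refine ⟨?_, ?_, notR i⟩
    · calc (2:ℕ) ≤ 1151121374334 := by norm_num
      _ = 1 * 1151121374334 := (one_mul _).symm
      _ ≤ 2^(i:ℕ) * 1151121374334 := by
          exact Nat.mul_le_mul_right _ (Nat.one_le_two_pow)
    · have h1 : 2^(i:ℕ) ≤ 2^k := Nat.pow_le_pow_right (by norm_num) (by omega)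
      have h2 : 2^k ≤ N / 1151121374334 := Nat.pow_log_le_self 2 (by
        have : 0 < N / 1151121374334 := Nat.div_pos hN (by norm_num)
        omega)
      calc 2^(i:ℕ) * 1151121374334 ≤ (N / 1151121374334) * 1151121374334 :=
            Nat.mul_le_mul_right _ (h1.trans h2)
      _ ≤ N := Nat.div_mul_le_self N 1151121374334
  let f : Fin (k+1) → ↥S := fun i => ⟨2^(i:ℕ) * 1151121374334, hmem i⟩
  have hinj : Function.Injective f := by
    intro i j hij
    have h1 : 2^(i:ℕ) * 1151121374334 = 2^(j:ℕ) * 1151121374334 :=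
      congrArg Subtype.val hij
    have h2 : (2:ℕ)^(i:ℕ) = 2^(j:ℕ) := Nat.eq_of_mul_eq_mul_right (by norm_num) h1
    have := Nat.pow_right_injective (le_refl 2) h2
    exact Fin.ext this
  have := Nat.card_le_card_of_injective f hinj
  simpa using this
end
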